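/- arXiv:1701.01970 — 3 statements merged into one kernel-verified Lean document; each statement's English description precedes it below -/
import Mathlib

section
/- Fix z = (z1,z2) ∈ [0,1)^2 and let f(t1,t2) = 1 if z1 < t1 and z2 < t2, and f(t1,t2) = 0 otherwise. Let j1, j2 ∈ ℕ₀ and m1 ∈ {0,…,2^{j1}−1}, m2 ∈ {0,…,2^{j2}−1}. If z lies in the interior of I_{j1,m1} × I_{j2,m2}, then μ_{(j1,j2),(m1,m2)}(f) = 2^{−(j1+j2+2)}·(1 − |2m1 + 1 − 2^{j1+1}z1|)·(1 − |2m2 + 1 − 2^{j2+1}z2|). -/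
/-!
The indicator of the quadrant `(z₁, ∞) × (z₂, ∞)` is a product, so the Haar coefficient is the
product of the two one-dimensional integrals `∫_{(z,1)} h_{j,m}`. The Haar function is the
difference of the indicators of the two halves of `I_{j,m}`; with `c` the centre of `I_{j,m}` and
`δ = 2^{-(j+1)}` its half-length, the integral over `(z, 1)` is the length of `(z, c)` minus
that of `[c, c + δ) ∩ (z, ∞)`, i.e. `|z - c| - δ`, a tent function of `z`.
-/

open MeasureTheory Set

/-- The L∞-normalized Haar function `h_{j,m}` on `[0,1)`: it is `+1` on the left half
`[2m/2^{j+1}, (2m+1)/2^{j+1})` of the dyadic interval `I_{j,m}`, `-1` on the right half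
`[(2m+1)/2^{j+1}, (2m+2)/2^{j+1})`, and `0` elsewhere. -/
noncomputable def haar (j m : ℕ) (t : ℝ) : ℝ :=
  if (2 * m : ℝ) / 2 ^ (j + 1) ≤ t ∧ t < (2 * m + 1 : ℝ) / 2 ^ (j + 1) then 1
  else if (2 * m + 1 : ℝ) / 2 ^ (j + 1) ≤ t ∧ t < (2 * m + 2 : ℝ) / 2 ^ (j + 1) then -1
  else 0

/-- First coordinate of a point of the Hammersley type point set:
`t_n/2 + t_{n-1}/2^2 + ⋯ + t_1/2^n`, where the index `i : Fin n` corresponds to `t_{i+1}`,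
so the digit `t i` gets divided by `2^{n - i}`. -/
noncomputable def hamX (n : ℕ) (t : Fin n → Bool) : ℝ :=
  ∑ i : Fin n, (if t i then (1 : ℝ) else 0) / 2 ^ (n - i.val)

/-- Second coordinate of a point of the Hammersley type point set:
`s_1/2 + s_2/2^2 + ⋯ + s_n/2^n` with `s_i = t_i` if `σ i = false` and `s_i = 1 - t_i`
if `σ i = true`, i.e. `s_i = t_i XOR σ i`. -/
noncomputable def hamY (n : ℕ) (σ : Fin n → Bool) (t : Fin n → Bool) : ℝ :=
  ∑ i : Fin n, (if (t i).xor (σ i) then (1 : ℝ) else 0) / 2 ^ (i.val + 1)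

/-- The points of the symmetrized Hammersley type multiset `R̃_n`, parametrized by a digit
vector `t` and two reflection bits: `(x,y)`, `(x,1-y)`, `(1-x,y)`, `(1-x,1-y)`. -/
noncomputable def symPoint (n : ℕ) (σ : Fin n → Bool) (z : (Fin n → Bool) × Bool × Bool) :
    ℝ × ℝ :=
  (if z.2.1 then 1 - hamX n z.1 else hamX n z.1,
   if z.2.2 then 1 - hamY n σ z.1 else hamY n σ z.1)

/-- The local discrepancy function of the symmetrized Hammersley type multiset `R̃_n`
with `N = 2^{n+2}` points counted with multiplicity. -/
noncomputable def discSym (n : ℕ) (σ : Fin n → Bool) (t1 t2 : ℝ) : ℝ :=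
  (∑ z : (Fin n → Bool) × Bool × Bool,
      if (symPoint n σ z).1 < t1 ∧ (symPoint n σ z).2 < t2 then (1 : ℝ) else 0) / 2 ^ (n + 2)
    - t1 * t2

theorem Set.Ioi_inter_Ico_of_le {α : Type*} [LinearOrder α] {p q z : α} (h : p ≤ z) :
    Ioi z ∩ Ico p q = Ioo z q := by
  ext t; simp only [mem_inter_iff, mem_Ioi, mem_Ico, mem_Ioo]; grind

theorem Set.Ioi_inter_Ico_of_lt {α : Type*} [LinearOrder α] {p q z : α} (h : z < p) :
    Ioi z ∩ Ico p q = Ico p q := by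
  ext t; simp only [mem_inter_iff, mem_Ioi, mem_Ico]; grind

theorem setIntegral_indicator_one_of_subset {X : Type*} [MeasurableSpace X] {μ : Measure X}
    {S T : Set X} (hT : MeasurableSet T) (hTS : T ⊆ S) :
    ∫ x in S, T.indicator 1 x ∂μ = μ.real T := by
  rw [integral_indicator_one hT, measureReal_restrict_apply hT, inter_eq_left.2 hTS]

theorem setIntegral_ite_lt_mul_indicator_sub {S : Set ℝ} {c δ z : ℝ}
    (hS : Ico (c - δ) (c + δ) ⊆ S) (hz : z ∈ Icc (c - δ) (c + δ)) :
    ∫ t in S, (if z < t then 1 else 0) *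
      ((Ico (c - δ) c).indicator 1 t - (Ico c (c + δ)).indicator 1 t) = |z - c| - δ := by
  have hδ : 0 ≤ δ := by linarith [hz.1, hz.2]
  have hA : Ioo z c ⊆ Ico (c - δ) (c + δ) :=
    Ioo_subset_Ico_self.trans (Ico_subset_Ico hz.1 (by linarith))
  have hB : Ioi z ∩ Ico c (c + δ) ⊆ Ico (c - δ) (c + δ) :=
    inter_subset_right.trans (Ico_subset_Ico (by linarith) le_rfl)
  have hBm : MeasurableSet (Ioi z ∩ Ico c (c + δ)) := measurableSet_Ioi.inter measurableSet_Ico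
  have hint {T : Set ℝ} (hT : T ⊆ Ico (c - δ) (c + δ)) (hTm : MeasurableSet T) :
      Integrable (T.indicator (1 : ℝ → ℝ)) (volume.restrict S) :=
    ((integrableOn_const measure_Ico_lt_top.ne).mono_set hT).integrable_indicator hTm |>.restrict
  have hintegrand : (fun t => (if z < t then (1 : ℝ) else 0) *
      ((Ico (c - δ) c).indicator 1 t - (Ico c (c + δ)).indicator 1 t))
      = fun t => (Ioo z c).indicator 1 t - (Ioi z ∩ Ico c (c + δ)).indicator 1 t := by
    ext t
    rw [mul_sub, ← Ioi_inter_Ico_of_le hz.1, inter_indicator_one, inter_indicator_one]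
    simp [indicator_apply]
  rw [hintegrand, integral_sub (hint hA measurableSet_Ioo) (hint hB hBm),
    setIntegral_indicator_one_of_subset measurableSet_Ioo (hA.trans hS),
    setIntegral_indicator_one_of_subset hBm (hB.trans hS), Real.volume_real_Ioo]
  rcases lt_or_ge z c with hzc | hcz
  · rw [Ioi_inter_Ico_of_lt hzc, Real.volume_real_Ico_of_le (by linarith),
      max_eq_left (by linarith), abs_of_neg (by linarith)]
    ring
  · rw [Ioi_inter_Ico_of_le hcz, Real.volume_real_Ioo_of_le hz.2,
      max_eq_right (by linarith), abs_of_nonneg (by linarith)]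
    ring

theorem haar_eq_indicator_sub (j m : ℕ) (t : ℝ) :
    haar j m t
      = (Ico ((2 * m + 1 : ℝ) / 2 ^ (j + 1) - 1 / 2 ^ (j + 1))
          ((2 * m + 1 : ℝ) / 2 ^ (j + 1))).indicator 1 t
        - (Ico ((2 * m + 1 : ℝ) / 2 ^ (j + 1))
          ((2 * m + 1 : ℝ) / 2 ^ (j + 1) + 1 / 2 ^ (j + 1))).indicator 1 t := by
  rw [← sub_div, ← add_div, show (2 * m + 1 : ℝ) - 1 = 2 * m by ring,
    show (2 * m + 1 : ℝ) + 1 = 2 * m + 2 by ring]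
  unfold haar
  simp only [indicator, mem_Ico, Pi.one_apply]
  split_ifs <;> grind

theorem setIntegral_Ico_ite_lt_mul_haar {j m : ℕ} (hm : m < 2 ^ j) {z : ℝ}
    (hz : z ∈ Icc ((m : ℝ) / 2 ^ j) ((m + 1) / 2 ^ j)) :
    ∫ t in Ico (0 : ℝ) 1, (if z < t then 1 else 0) * haar j m t
      = -(1 / 2 ^ (j + 1)) * (1 - |2 * (m : ℝ) + 1 - 2 ^ (j + 1) * z|) := by
  set c : ℝ := (2 * m + 1) / 2 ^ (j + 1)
  set δ : ℝ := 1 / 2 ^ (j + 1)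
  have hc_sub : c - δ = m / 2 ^ j := by simp only [c, δ]; field_simp; ring
  have hc_add : c + δ = (m + 1) / 2 ^ j := by simp only [c, δ]; field_simp; ring
  have hsub : Ico (c - δ) (c + δ) ⊆ Ico 0 1 := by
    rw [hc_sub, hc_add]
    refine Ico_subset_Ico (by positivity) ((div_le_one (by positivity)).2 ?_)
    exact_mod_cast hm
  have habs : |2 * (m : ℝ) + 1 - 2 ^ (j + 1) * z| = 2 ^ (j + 1) * |z - c| := by
    rw [show 2 * (m : ℝ) + 1 - 2 ^ (j + 1) * z = 2 ^ (j + 1) * (c - z) by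
      simp only [c]; field_simp, abs_mul, abs_of_pos (by positivity), abs_sub_comm]
  simp only [haar_eq_indicator_sub]
  rw [setIntegral_ite_lt_mul_indicator_sub hsub (by rwa [hc_sub, hc_add]), habs]
  simp only [δ]
  field_simp
  ring

theorem counting_haar_coeff_general (z1 z2 : ℝ)
    (j1 j2 m1 m2 : ℕ) (h1 : m1 < 2 ^ j1) (h2 : m2 < 2 ^ j2)
    (hz1 : z1 ∈ Set.Ioo ((m1 : ℝ) / 2 ^ j1) ((m1 + 1) / 2 ^ j1))
    (hz2 : z2 ∈ Set.Ioo ((m2 : ℝ) / 2 ^ j2) ((m2 + 1) / 2 ^ j2)) :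
    (∫ t1 in Set.Ico (0 : ℝ) 1, ∫ t2 in Set.Ico (0 : ℝ) 1,
      (if z1 < t1 ∧ z2 < t2 then (1 : ℝ) else 0) * haar j1 m1 t1 * haar j2 m2 t2)
    = 1 / 2 ^ (j1 + j2 + 2) * (1 - |2 * (m1 : ℝ) + 1 - 2 ^ (j1 + 1) * z1|)
        * (1 - |2 * (m2 : ℝ) + 1 - 2 ^ (j2 + 1) * z2|) := by
  have hsplit (t1 t2 : ℝ) :
      (if z1 < t1 ∧ z2 < t2 then (1 : ℝ) else 0) * haar j1 m1 t1 * haar j2 m2 t2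
        = ((if z1 < t1 then 1 else 0) * haar j1 m1 t1)
          * ((if z2 < t2 then 1 else 0) * haar j2 m2 t2) := by
    rw [ite_and]; split_ifs <;> ring
  simp only [hsplit, integral_const_mul]
  rw [setIntegral_Ico_ite_lt_mul_haar h2 (Ioo_subset_Icc_self hz2), integral_mul_const,
    setIntegral_Ico_ite_lt_mul_haar h1 (Ioo_subset_Icc_self hz1),
    show (2 : ℝ) ^ (j1 + j2 + 2) = 2 ^ (j1 + 1) * 2 ^ (j2 + 1) by ring]
  field_simp

/-- Lemma 3.3(i): for `f(t) = 1_{[0,t₁)×[0,t₂)}(z)` with `z` in the interior of the dyadic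
box `I_{(j₁,j₂),(m₁,m₂)}` with `j₁, j₂ ∈ ℕ₀`, the Haar coefficient equals
`2^{-(j₁+j₂+2)}(1 - |2m₁+1-2^{j₁+1}z₁|)(1 - |2m₂+1-2^{j₂+1}z₂|)`. -/
theorem counting_haar_coeff (z1 z2 : ℝ)
    (hz1' : z1 ∈ Set.Ico (0 : ℝ) 1) (hz2' : z2 ∈ Set.Ico (0 : ℝ) 1)
    (j1 j2 m1 m2 : ℕ) (h1 : m1 < 2 ^ j1) (h2 : m2 < 2 ^ j2)
    (hz1 : z1 ∈ Set.Ioo ((m1 : ℝ) / 2 ^ j1) ((m1 + 1) / 2 ^ j1))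
    (hz2 : z2 ∈ Set.Ioo ((m2 : ℝ) / 2 ^ j2) ((m2 + 1) / 2 ^ j2)) :
    (∫ t1 in Set.Ico (0 : ℝ) 1, ∫ t2 in Set.Ico (0 : ℝ) 1,
      (if z1 < t1 ∧ z2 < t2 then (1 : ℝ) else 0) * haar j1 m1 t1 * haar j2 m2 t2)
    = 1 / 2 ^ (j1 + j2 + 2) * (1 - |2 * (m1 : ℝ) + 1 - 2 ^ (j1 + 1) * z1|)
        * (1 - |2 * (m2 : ℝ) + 1 - 2 ^ (j2 + 1) * z2|) :=
  counting_haar_coeff_general z1 z2 j1 j2 m1 m2 h1 h2 hz1 hz2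
end

section
/- Fix z = (z1,z2) ∈ [0,1)^2 and let f(t1,t2) = 1 if z1 < t1 and z2 < t2, and f(t1,t2) = 0 otherwise. Let k ∈ ℕ₀ and m ∈ {0,…,2^k−1}. If z1 ∈ (0,1) and z2 lies in the interior of I_{k,m}, then μ_{(−1,k),(0,m)}(f) = ∫_{[0,1)^2} f(t)·h_{k,m}(t2) dt = −2^{−(k+1)}·(1 − z1)·(1 − |2m + 1 − 2^{k+1}z2|). Likewise, if z2 ∈ (0,1) and z1 lies in the interior of I_{k,m}, then μ_{(k,−1),(m,0)}(f) = ∫_{[0,1)^2} f(t)·h_{k,m}(t1) dt = −2^{−(k+1)}·(1 − z2)·(1 − |2m + 1 − 2^{k+1}z1|). -/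
/-! The integrand factors as a function of `t₁` times a function of `t₂`, so the iterated
integral is a product of two one-dimensional integrals. One is `∫_{[0,1)} 1_{z<t} dt = 1 - z`.
The other, `∫_z^1 h_{k,m}`, is a hat function of `z` on `I_{k,m} = [a, a + 2d)`,
`d = 2^{-(k+1)}`: the left half `[a, a + d)` contributes `max (a + d - z) 0` and the right half
`-min (a + 2d - z) d`, which add up to `|z - (a + d)| - d`. -/

open MeasureTheory Set

lemma volume_real_Ico_inter_Ioi (a b z : ℝ) :
    volume.real (Ico a b ∩ Ioi z) = max (b - max a z) 0 := by
  have h : Ico a b ∩ Ici z = Ico (max a z) b := by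
    rw [← Ici_inter_Iio, inter_right_comm, Ici_inter_Ici, Ici_inter_Iio]
  rw [← Real.volume_real_Ico, ← h]
  exact measureReal_congr ((ae_eq_refl _).inter Ioi_ae_eq_Ici)

lemma setIntegral_Ioi_indicator_one (a b z : ℝ) :
    ∫ t in Ioi z, (Ico a b).indicator (1 : ℝ → ℝ) t = max (b - max a z) 0 := by
  rw [integral_indicator_one measurableSet_Ico, measureReal_restrict_apply measurableSet_Ico,
    volume_real_Ico_inter_Ioi]

lemma ite_lt_eq_indicator (z t : ℝ) :
    (if z < t then (1 : ℝ) else 0) = (Ioi z).indicator 1 t := by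
  simp [indicator_apply]

lemma setIntegral_Ico_zero_one_ite_lt {z : ℝ} (h0 : 0 ≤ z) (h1 : z ≤ 1) :
    ∫ t in Ico (0 : ℝ) 1, (if z < t then (1 : ℝ) else 0) = 1 - z := by
  simp_rw [ite_lt_eq_indicator]
  rw [integral_indicator_one measurableSet_Ioi, measureReal_restrict_apply measurableSet_Ioi,
    inter_comm, volume_real_Ico_inter_Ioi, max_eq_right h0, max_eq_left (sub_nonneg.2 h1)]

lemma setIntegral_Ioi_indicator_sub_indicator {a d z : ℝ} (hz : z ∈ Icc a (a + 2 * d)) :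
    ∫ t in Ioi z, ((Ico a (a + d)).indicator 1 t - (Ico (a + d) (a + 2 * d)).indicator 1 t)
      = |z - (a + d)| - d := by
  have hi (b c : ℝ) : IntegrableOn ((Ico b c).indicator (1 : ℝ → ℝ)) (Ioi z) :=
    ((integrable_indicator_iff measurableSet_Ico).2
      (integrableOn_const measure_Ico_lt_top.ne)).integrableOn
  rw [integral_sub (hi _ _) (hi _ _), setIntegral_Ioi_indicator_one, setIntegral_Ioi_indicator_one]
  rcases le_total z (a + d) with h | h
  · rw [max_eq_right hz.1, max_eq_left h, abs_of_nonpos (sub_nonpos.2 h), max_eq_left,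
      max_eq_left] <;> linarith [hz.1, hz.2]
  · rw [max_eq_right hz.1, max_eq_right h, abs_of_nonneg (sub_nonneg.2 h), max_eq_right,
      max_eq_left] <;> linarith [hz.1, hz.2]

section Haar

variable {k m : ℕ}

lemma haar_eq_indicator_sub_indicator (t : ℝ) :
    haar k m t =
      (Ico ((2 * m : ℝ) / 2 ^ (k + 1)) (2 * m / 2 ^ (k + 1) + 1 / 2 ^ (k + 1))).indicator 1 t
      - (Ico ((2 * m : ℝ) / 2 ^ (k + 1) + 1 / 2 ^ (k + 1))
          (2 * m / 2 ^ (k + 1) + 2 * (1 / 2 ^ (k + 1)))).indicator 1 t := by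
  have h1 : (2 * m + 1 : ℝ) / 2 ^ (k + 1) = 2 * m / 2 ^ (k + 1) + 1 / 2 ^ (k + 1) := by ring
  have h2 : (2 * m + 2 : ℝ) / 2 ^ (k + 1) = 2 * m / 2 ^ (k + 1) + 2 * (1 / 2 ^ (k + 1)) := by ring
  simp only [haar, h1, h2, indicator_apply, mem_Ico, Pi.one_apply]
  split_ifs <;> grind

lemma haar_eq_zero_of_notMem_Ico (hm : m < 2 ^ k) {t : ℝ} (ht : t ∉ Ico (0 : ℝ) 1) :
    haar k m t = 0 := by
  have hP : (0 : ℝ) < 2 ^ (k + 1) := by positivity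
  have h0 : (0 : ℝ) ≤ 2 * m / 2 ^ (k + 1) := by positivity
  have h1 : (2 * m + 2 : ℝ) / 2 ^ (k + 1) ≤ 1 := by
    have : (m : ℝ) + 1 ≤ 2 ^ k := by exact_mod_cast hm
    rw [div_le_one hP, pow_succ]
    linarith
  have h01 : (2 * m : ℝ) / 2 ^ (k + 1) ≤ (2 * m + 1) / 2 ^ (k + 1) := by gcongr; linarith
  have h12 : (2 * m + 1 : ℝ) / 2 ^ (k + 1) ≤ (2 * m + 2) / 2 ^ (k + 1) := by gcongr; linarith
  rw [haar, if_neg, if_neg] <;> rintro ⟨ha, hb⟩ <;> exact ht ⟨by linarith, by linarith⟩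

lemma setIntegral_Ioi_haar {z : ℝ} (hz : z ∈ Icc ((m : ℝ) / 2 ^ k) ((m + 1) / 2 ^ k)) :
    ∫ t in Ioi z, haar k m t
      = -(1 / 2 ^ (k + 1)) * (1 - |2 * (m : ℝ) + 1 - 2 ^ (k + 1) * z|) := by
  have hP : (0 : ℝ) < 2 ^ (k + 1) := by positivity
  have hm : (m : ℝ) / 2 ^ k = 2 * m / 2 ^ (k + 1) := by rw [pow_succ]; field_simp
  have hm1 : ((m : ℝ) + 1) / 2 ^ k = 2 * m / 2 ^ (k + 1) + 2 * (1 / 2 ^ (k + 1)) := by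
    rw [pow_succ]; field_simp
  rw [hm, hm1] at hz
  have habs : 2 * (m : ℝ) + 1 - 2 ^ (k + 1) * z
      = -(2 ^ (k + 1) * (z - (2 * m / 2 ^ (k + 1) + 1 / 2 ^ (k + 1)))) := by
    field_simp; ring
  simp_rw [haar_eq_indicator_sub_indicator]
  rw [setIntegral_Ioi_indicator_sub_indicator hz, habs, abs_neg, abs_mul, abs_of_pos hP]
  field_simp
  ring

lemma setIntegral_Ico_zero_one_ite_lt_mul_haar (hm : m < 2 ^ k) {z : ℝ}
    (hz : z ∈ Icc ((m : ℝ) / 2 ^ k) ((m + 1) / 2 ^ k)) :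
    ∫ t in Ico (0 : ℝ) 1, (if z < t then (1 : ℝ) else 0) * haar k m t
      = -(1 / 2 ^ (k + 1)) * (1 - |2 * (m : ℝ) + 1 - 2 ^ (k + 1) * z|) := by
  simp_rw [ite_lt_eq_indicator, ← indicator_mul_left, Pi.one_apply, one_mul]
  rw [setIntegral_indicator measurableSet_Ioi, ← setIntegral_Ioi_haar hz]
  exact (setIntegral_eq_of_subset_of_forall_sdiff_eq_zero measurableSet_Ioi inter_subset_right
    fun t ht ↦ haar_eq_zero_of_notMem_Ico hm fun h ↦ ht.2 ⟨h, ht.1⟩).symm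

end Haar

theorem counting_haar_coeff_neg_general (z1 z2 : ℝ)
    (k m : ℕ) (hm : m < 2 ^ k) :
    (z1 ∈ Set.Ioo (0 : ℝ) 1 → z2 ∈ Set.Ioo ((m : ℝ) / 2 ^ k) ((m + 1) / 2 ^ k) →
      (∫ t1 in Set.Ico (0 : ℝ) 1, ∫ t2 in Set.Ico (0 : ℝ) 1,
        (if z1 < t1 ∧ z2 < t2 then (1 : ℝ) else 0) * haar k m t2)
      = -(1 / 2 ^ (k + 1)) * (1 - z1) * (1 - |2 * (m : ℝ) + 1 - 2 ^ (k + 1) * z2|)) ∧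
    (z2 ∈ Set.Ioo (0 : ℝ) 1 → z1 ∈ Set.Ioo ((m : ℝ) / 2 ^ k) ((m + 1) / 2 ^ k) →
      (∫ t1 in Set.Ico (0 : ℝ) 1, ∫ t2 in Set.Ico (0 : ℝ) 1,
        (if z1 < t1 ∧ z2 < t2 then (1 : ℝ) else 0) * haar k m t1)
      = -(1 / 2 ^ (k + 1)) * (1 - z2) * (1 - |2 * (m : ℝ) + 1 - 2 ^ (k + 1) * z1|)) := by
  have hsplit (t1 t2 : ℝ) : (if z1 < t1 ∧ z2 < t2 then (1 : ℝ) else 0)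
      = (if z1 < t1 then 1 else 0) * (if z2 < t2 then 1 else 0) := by
    rw [ite_zero_mul_ite_zero, one_mul]
  refine ⟨fun hz1 hz2 ↦ ?_, fun hz2 hz1 ↦ ?_⟩
  · simp_rw [hsplit, mul_assoc, integral_const_mul, integral_mul_const,
      setIntegral_Ico_zero_one_ite_lt_mul_haar hm (Ioo_subset_Icc_self hz2),
      setIntegral_Ico_zero_one_ite_lt hz1.1.le hz1.2.le]
    ring
  · simp_rw [hsplit, mul_right_comm _ _ (haar k m _), integral_const_mul, integral_mul_const,
      setIntegral_Ico_zero_one_ite_lt hz2.1.le hz2.2.le,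
      setIntegral_Ico_zero_one_ite_lt_mul_haar hm (Ioo_subset_Icc_self hz1)]
    ring

/-- Lemma 3.3(ii)&(iii): for `f(t) = 1_{[0,t₁)×[0,t₂)}(z)` and `j = (-1,k)` resp.
`j = (k,-1)` with `k ∈ ℕ₀`, if `z` lies in the interior of the corresponding dyadic box
then `μ_{(-1,k),(0,m)}(f) = -2^{-(k+1)}(1-z₁)(1-|2m+1-2^{k+1}z₂|)` and
`μ_{(k,-1),(m,0)}(f) = -2^{-(k+1)}(1-z₂)(1-|2m+1-2^{k+1}z₁|)`. -/
theorem counting_haar_coeff_neg (z1 z2 : ℝ)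
    (hz1 : z1 ∈ Set.Ico (0 : ℝ) 1) (hz2 : z2 ∈ Set.Ico (0 : ℝ) 1)
    (k m : ℕ) (hm : m < 2 ^ k) :
    (z1 ∈ Set.Ioo (0 : ℝ) 1 → z2 ∈ Set.Ioo ((m : ℝ) / 2 ^ k) ((m + 1) / 2 ^ k) →
      (∫ t1 in Set.Ico (0 : ℝ) 1, ∫ t2 in Set.Ico (0 : ℝ) 1,
        (if z1 < t1 ∧ z2 < t2 then (1 : ℝ) else 0) * haar k m t2)
      = -(1 / 2 ^ (k + 1)) * (1 - z1) * (1 - |2 * (m : ℝ) + 1 - 2 ^ (k + 1) * z2|)) ∧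
    (z2 ∈ Set.Ioo (0 : ℝ) 1 → z1 ∈ Set.Ioo ((m : ℝ) / 2 ^ k) ((m + 1) / 2 ^ k) →
      (∫ t1 in Set.Ico (0 : ℝ) 1, ∫ t2 in Set.Ico (0 : ℝ) 1,
        (if z1 < t1 ∧ z2 < t2 then (1 : ℝ) else 0) * haar k m t1)
      = -(1 / 2 ^ (k + 1)) * (1 - z2) * (1 - |2 * (m : ℝ) + 1 - 2 ^ (k + 1) * z1|)) :=
  counting_haar_coeff_neg_general z1 z2 k m hm
end

section
/- Let n ∈ ℕ, let R_n be a Hammersley type point set (for an arbitrary fixed choice function σ), and let \tilde{R}_n be the associated symmetrized multiset with N = 2^{n+2} points. Let k ∈ ℕ₀ with k < n and m ∈ {0,…,2^k−1}. Then the sum over \tilde{R}_n (with multiplicity) of (1 − |2m + 1 − 2^{k+1}z1|)·(1 − z2), extended over those points z = (z1,z2) of \tilde{R}_n whose first coordinate z1 lies in the interior of I_{k,m}, equals 2^{n−k}. -/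
open MeasureTheory Set

/-! Outside the interior of `I_{k,m}` the factor `1 - |2m+1 - 2^{k+1} z₁|` is nonpositive, so the
summand is the tent function `max 0 (1 - |2m+1 - 2^{k+1} z₁|)` times `1 - z₂`. Summing over the
reflection `y ↦ 1 - y` turns `1 - z₂` into `1`, and the reflection `x ↦ 1 - x` maps the grid
`{j / 2^n}` of first coordinates onto itself up to the endpoints `0` and `1`, where the tent
vanishes. So the sum is twice the sum of the tent over the grid, and with `L = 2^{n-k-1}` the
grid points in the support of the tent carry the values `(L - |L - r|) / L`, `0 < r < 2L`,
which add up to `L`. -/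

open Finset

noncomputable def dyadicHat (k m : ℕ) (u : ℝ) : ℝ :=
  max 0 (1 - |2 * (m : ℝ) + 1 - 2 ^ (k + 1) * u|)

lemma dyadicHat_eq_ite (k m : ℕ) (u : ℝ) :
    dyadicHat k m u = if (m : ℝ) / 2 ^ k < u ∧ u < ((m : ℝ) + 1) / 2 ^ k
      then 1 - |2 * (m : ℝ) + 1 - 2 ^ (k + 1) * u| else 0 := by
  have hpos : (0 : ℝ) < 2 ^ k := by positivity
  have hiff : (m : ℝ) / 2 ^ k < u ∧ u < ((m : ℝ) + 1) / 2 ^ k ↔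
      |2 * (m : ℝ) + 1 - 2 ^ (k + 1) * u| < 1 := by
    rw [div_lt_iff₀ hpos, lt_div_iff₀ hpos, abs_lt, pow_succ]
    constructor <;> rintro ⟨h₁, h₂⟩ <;> constructor <;> nlinarith
  unfold dyadicHat
  split_ifs with h
  · exact max_eq_right (by linarith [hiff.mp h])
  · exact max_eq_left (by linarith [not_lt.mp (mt hiff.mpr h)])

lemma dyadicHat_zero (k m : ℕ) : dyadicHat k m 0 = 0 :=
  max_eq_left <| by
    linarith [le_abs_self (2 * (m : ℝ) + 1 - 2 ^ (k + 1) * 0), m.cast_nonneg (α := ℝ)]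

lemma dyadicHat_one {k m : ℕ} (hm : m < 2 ^ k) : dyadicHat k m 1 = 0 := by
  have h : (2 * m + 2 : ℝ) ≤ 2 ^ (k + 1) := by
    rw [pow_succ]; exact_mod_cast (by omega : 2 * m + 2 ≤ 2 ^ k * 2)
  exact max_eq_left (by linarith [neg_le_abs (2 * (m : ℝ) + 1 - 2 ^ (k + 1) * 1)])

lemma sum_range_sub_abs_sub (L : ℕ) :
    ∑ r ∈ range (2 * L), ((L : ℝ) - |(L : ℝ) - r|) = L ^ 2 := by
  rw [two_mul, sum_range_add, ← sum_add_distrib]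
  have hpair : ∀ r ∈ range L,
      ((L : ℝ) - |(L : ℝ) - r|) + ((L : ℝ) - |(L : ℝ) - ((L + r : ℕ) : ℝ)|) = L := by
    intro r hr
    have hrL : (r : ℝ) ≤ L := by exact_mod_cast (mem_range.mp hr).le
    push_cast
    rw [abs_of_nonneg (by linarith), show (L : ℝ) - (L + r) = -r by ring, abs_neg,
      abs_of_nonneg r.cast_nonneg]
    ring
  rw [sum_congr rfl hpair, sum_const, card_range, nsmul_eq_mul, sq]

lemma sum_range_max_zero_sub_abs {L c N : ℕ} (hLc : L ≤ c) (hcN : c + L ≤ N) :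
    ∑ j ∈ range N, max 0 ((L : ℝ) - |(c : ℝ) - j|) = L ^ 2 := by
  have hwindow : Finset.Ico (c - L) (c + L) ⊆ range N := fun j hj => by
    simp only [Finset.mem_Ico, Finset.mem_range] at hj ⊢; omega
  rw [← sum_subset hwindow fun j _ hj => ?_, sum_Ico_eq_sum_range,
    show c + L - (c - L) = 2 * L by omega, ← sum_range_sub_abs_sub]
  · refine sum_congr rfl fun r hr => ?_
    have hr2L : (r : ℝ) ≤ 2 * L := by exact_mod_cast (mem_range.mp hr).le
    rw [Nat.cast_add, Nat.cast_sub hLc, show (c : ℝ) - (c - L + r) = L - r by ring]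
    exact max_eq_right (sub_nonneg.mpr
      (abs_le.mpr ⟨by linarith, by linarith [r.cast_nonneg (α := ℝ)]⟩))
  · have hfar : (L : ℝ) ≤ |(c : ℝ) - j| := by
      rw [Finset.mem_Ico, not_and_or, not_le, not_lt] at hj
      rcases hj with hj | hj
      · have : (j : ℝ) + L < c := by exact_mod_cast (by omega : j + L < c)
        exact le_abs.mpr (Or.inl (by linarith))
      · have : (c : ℝ) + L ≤ j := by exact_mod_cast hj
        exact le_abs.mpr (Or.inr (by linarith))
    exact max_eq_left (by linarith)

lemma dyadicHat_div_two_pow {k m p : ℕ} (j : ℕ) :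
    dyadicHat k m (j / 2 ^ (k + 1 + p)) =
      max 0 (((2 ^ p : ℕ) : ℝ) - |(((2 * m + 1) * 2 ^ p : ℕ) : ℝ) - j|) /
        ((2 ^ p : ℕ) : ℝ) := by
  have hL : (0 : ℝ) < 2 ^ p := by positivity
  have hcentre : 2 * (m : ℝ) + 1 - 2 ^ (k + 1) * (j / 2 ^ (k + 1 + p)) =
      ((2 * m + 1) * 2 ^ p - j) / 2 ^ p := by
    rw [pow_add]; field_simp; ring
  rw [dyadicHat, hcentre, abs_div, abs_of_pos hL, one_sub_div hL.ne']
  push_cast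
  rw [← max_div_div_right hL.le, zero_div]

lemma sum_range_dyadicHat {n k m : ℕ} (hk : k < n) (hm : m < 2 ^ k) :
    ∑ j ∈ range (2 ^ n), dyadicHat k m (j / 2 ^ n) = 2 ^ (n - k - 1) := by
  obtain ⟨p, rfl⟩ : ∃ p, n = k + 1 + p := ⟨n - (k + 1), by omega⟩
  have hwidth : (2 * m + 1) * 2 ^ p + 2 ^ p ≤ 2 ^ (k + 1 + p) := by
    rw [pow_add, pow_succ]
    nlinarith [Nat.one_le_two_pow (n := p)]
  simp only [dyadicHat_div_two_pow]
  rw [← sum_div, sum_range_max_zero_sub_abs (Nat.le_mul_of_pos_left _ (by omega)) hwidth,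
    show k + 1 + p - k - 1 = p by omega]
  push_cast
  field_simp

lemma sum_range_comp_one_sub_div (f : ℝ → ℝ) (h0 : f 0 = 0) (h1 : f 1 = 0) (N : ℕ) :
    ∑ j ∈ range N, f (1 - j / N) = ∑ j ∈ range N, f (j / N) := by
  rcases N.eq_zero_or_pos with rfl | hN
  · simp
  have hN' : (N : ℝ) ≠ 0 := by positivity
  calc ∑ j ∈ range N, f (1 - j / N) = ∑ j ∈ range (N + 1), f (1 - j / N) := by
        rw [sum_range_succ, div_self hN', sub_self, h0, add_zero]
    _ = ∑ j ∈ range (N + 1), f (j / N) := by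
        rw [← sum_range_reflect]
        refine sum_congr rfl fun j hj => ?_
        rw [add_tsub_cancel_right, Nat.cast_sub (by simpa [Nat.lt_succ_iff] using hj),
          sub_div, div_self hN', sub_sub_cancel]
    _ = ∑ j ∈ range N, f (j / N) := by rw [sum_range_succ, div_self hN', h1, add_zero]

def bitsEquiv (n : ℕ) : (Fin n → Bool) ≃ Fin (2 ^ n) :=
  (Equiv.arrowCongr (Equiv.refl (Fin n)) finTwoEquiv.symm).trans finFunctionFinEquiv

lemma hamX_eq_bitsEquiv_div (n : ℕ) (t : Fin n → Bool) :
    hamX n t = (bitsEquiv n t : ℕ) / 2 ^ n := by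
  rw [bitsEquiv, Equiv.trans_apply, finFunctionFinEquiv_apply, hamX]
  push_cast
  rw [sum_div]
  refine sum_congr rfl fun i _ => ?_
  have hsplit : (2 : ℝ) ^ n = 2 ^ (n - i.val) * 2 ^ i.val := by
    rw [← pow_add, Nat.sub_add_cancel i.is_lt.le]
  rcases Bool.eq_false_or_eq_true (t i) with h | h <;>
    simp [h, hsplit, finTwoEquiv, div_mul_cancel_right₀]

lemma sum_comp_hamX (n : ℕ) (G : ℝ → ℝ) :
    ∑ t : Fin n → Bool, G (hamX n t) = ∑ j ∈ range (2 ^ n), G (j / 2 ^ n) := by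
  simp only [hamX_eq_bitsEquiv_div]
  rw [← Fin.sum_univ_eq_sum_range (fun j => G (j / 2 ^ n))]
  exact Fintype.sum_equiv (bitsEquiv n) _ _ fun _ => rfl

lemma sum_reflections_symPoint (n : ℕ) (σ : Fin n → Bool) (f : ℝ → ℝ)
    (t : Fin n → Bool) :
    ∑ b : Bool × Bool, f (symPoint n σ (t, b)).1 * (1 - (symPoint n σ (t, b)).2) =
      f (hamX n t) + f (1 - hamX n t) := by
  simp only [Fintype.sum_prod_type, Fintype.sum_bool, symPoint, if_true]
  simp only [Bool.false_eq_true, if_false]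
  ring

/-- For the symmetrized Hammersley type multiset `R̃_n`, `k < n` and `m ∈ {0,…,2^k-1}`, the
sum (with multiplicity) over the points `z` of `R̃_n` with `z₁` in the interior of `I_{k,m}`
of `(1 - |2m+1-2^{k+1}z₁|)(1 - z₂)` equals `2^{n-k}`. -/
theorem symmetrized_strip_sum (n : ℕ) (σ : Fin n → Bool) (k m : ℕ)
    (hk : k < n) (hm : m < 2 ^ k) :
    (∑ z : (Fin n → Bool) × Bool × Bool,
      if (m : ℝ) / 2 ^ k < (symPoint n σ z).1 ∧ (symPoint n σ z).1 < ((m : ℝ) + 1) / 2 ^ k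
      then (1 - |2 * (m : ℝ) + 1 - 2 ^ (k + 1) * (symPoint n σ z).1|)
            * (1 - (symPoint n σ z).2) else 0)
      = 2 ^ (n - k) := by
  simp only [← ite_zero_mul, ← dyadicHat_eq_ite]
  rw [Fintype.sum_prod_type]
  simp only [sum_reflections_symPoint, sum_add_distrib]
  have hreflect := sum_range_comp_one_sub_div _ (dyadicHat_zero k m) (dyadicHat_one hm) (2 ^ n)
  push_cast at hreflect
  rw [sum_comp_hamX, sum_comp_hamX n (fun u => dyadicHat k m (1 - u)), hreflect,
    sum_range_dyadicHat hk hm, ← two_mul, ← pow_succ', show n - k - 1 + 1 = n - k by omega]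
end
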